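/- arXiv:2201.10878 — 2 statements merged into one kernel-verified Lean document; each statement's English description precedes it below -/
import Mathlib

section
/- Let G₂(q) = -1/24 + Σ_{n≥1} (Σ_{d|n} d) qⁿ be the weight-2 Eisenstein series (as a formal power series). Then the logarithmic-derivative identity holds: q·d/dq of ∏_{n≥1}(1-qⁿ)^{-24} equals (1 + 24·G₂(q)) · ∏_{n≥1}(1-qⁿ)^{-24}. -/
open PowerSeries Finset

noncomputable section

/-- The operator `q·d/dq` on formal power series: sends `Σ aₙ qⁿ` to `Σ n·aₙ qⁿ`. -/
def qd (f : PowerSeries ℚ) : PowerSeries ℚ :=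
  PowerSeries.mk fun n => (n : ℚ) * PowerSeries.coeff n f

/-- The weight-2 Eisenstein series `G₂(q) = -1/24 + Σ_{n≥1} σ₁(n) qⁿ`. -/
def G2 : PowerSeries ℚ :=
  PowerSeries.mk fun n => if n = 0 then -(1 / 24) else ∑ d ∈ n.divisors, (d : ℚ)

/-!
`Φ` is inverse to the partial product `P_N = ∏_{n≤N} (1 - qⁿ)^24` modulo `q^{N+1}`. Since `q·d/dq`
is a derivation, the logarithmic derivative of `P_N` is `-Σ_{k≤N} 24k·qᵏ/(1 - qᵏ)`, and
`qᵏ/(1 - qᵏ) = Σ_{j≥1} q^{jk}` shows that its coefficient of `qᵐ` for `m ≤ N` is `-24σ₁(m)`, the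
coefficient of `-(1 + 24·G₂)`. Hence `q·d/dq Φ ≡ (1 + 24·G₂)·Φ` modulo `q^{N+1}` for every `N`.
-/

theorem Derivation.map_prod_of_map_eq_mul {R A ι : Type*} [CommSemiring R] [CommSemiring A]
    [Algebra R A] (D : Derivation R A A) (s : Finset ι) (f u : ι → A)
    (h : ∀ i ∈ s, D (f i) = u i * f i) :
    D (∏ i ∈ s, f i) = (∑ i ∈ s, u i) * ∏ i ∈ s, f i := by
  classical
  induction s using Finset.induction_on with
  | empty => simp
  | insert a s ha ih =>
    rw [prod_insert ha, sum_insert ha, D.leibniz, smul_eq_mul, smul_eq_mul,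
      h a (mem_insert_self a s), ih fun i hi => h i (mem_insert_of_mem hi)]
    ring

theorem Derivation.map_pow_of_map_eq_mul {R A : Type*} [CommSemiring R] [CommSemiring A]
    [Algebra R A] (D : Derivation R A A) (n : ℕ) {f u : A} (h : D f = u * f) :
    D (f ^ n) = n * u * f ^ n := by
  simpa using D.map_prod_of_map_eq_mul (range n) (fun _ => f) (fun _ => u) (fun _ _ => h)

namespace PowerSeries

theorem X_pow_dvd_sub_iff_trunc_eq {R : Type*} [Ring R] {n : ℕ} {f g : R⟦X⟧} :
    X ^ n ∣ f - g ↔ trunc n f = trunc n g := by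
  simp only [X_pow_dvd_iff, map_sub, sub_eq_zero, Polynomial.ext_iff, coeff_trunc]
  refine ⟨fun h m => ?_, fun h m hm => by simpa [hm] using h m⟩
  split_ifs with hm
  · exact h m hm
  · rfl

theorem eq_zero_of_forall_X_pow_dvd {R : Type*} [Semiring R] {f : R⟦X⟧} (h : ∀ n, X ^ n ∣ f) :
    f = 0 := by
  ext m
  exact X_pow_dvd_iff.mp (h (m + 1)) m m.lt_succ_self

variable {K : Type*} [Field K]

theorem coeff_inv_one_sub_X_pow {k : ℕ} (hk : k ≠ 0) (m : ℕ) :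
    coeff m ((1 - X ^ k : K⟦X⟧)⁻¹) = if k ∣ m then 1 else 0 := by
  have hexpand : (1 - X ^ k : K⟦X⟧)⁻¹ = expand k hk (mk 1) := by
    rw [inv_eq_iff_mul_eq_one (by simp [hk])]
    simpa using congrArg (expand k hk) (mk_one_mul_one_sub_eq_one K)
  rw [hexpand, coeff_expand]
  simp

theorem coeff_inv_one_sub_X_pow_sub_one {k : ℕ} (hk : k ≠ 0) (m : ℕ) :
    coeff m ((1 - X ^ k : K⟦X⟧)⁻¹ - 1) = if k ∈ m.divisors then 1 else 0 := by
  simp only [map_sub, coeff_inv_one_sub_X_pow hk, coeff_one, Nat.mem_divisors]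
  rcases eq_or_ne m 0 with rfl | hm <;> simp [*]

end PowerSeries

def qdDerivation : Derivation ℚ ℚ⟦X⟧ ℚ⟦X⟧ := (X : ℚ⟦X⟧) • d⁄dX ℚ

theorem qdDerivation_apply (f : ℚ⟦X⟧) : qdDerivation f = qd f := by
  ext (_ | n)
  · simp [qdDerivation, qd]
  · simp [qdDerivation, qd, coeff_derivative]
    ring

theorem qd_mul (f g : ℚ⟦X⟧) : qd (f * g) = qd f * g + f * qd g := by
  simp only [← qdDerivation_apply, Derivation.leibniz, smul_eq_mul]
  ring

theorem X_pow_dvd_qd {n : ℕ} {f : ℚ⟦X⟧} (h : X ^ n ∣ f) : X ^ n ∣ qd f := by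
  rw [X_pow_dvd_iff] at h ⊢
  intro m hm
  simp [qd, h m hm]

theorem qd_one_sub_X_pow {k : ℕ} (hk : k ≠ 0) :
    qd (1 - X ^ k) = -C (k : ℚ) * ((1 - X ^ k)⁻¹ - 1) * (1 - X ^ k) := by
  rw [mul_assoc, sub_mul, PowerSeries.inv_mul_cancel _ (by simp [hk])]
  ext m
  simp only [qd, coeff_mk, map_sub, coeff_one, coeff_X_pow, neg_mul, map_neg, coeff_C_mul]
  split_ifs <;> simp_all

theorem X_pow_dvd_qd_sub_mul_of_X_pow_dvd_mul_sub_one {n : ℕ} {Φ P L : ℚ⟦X⟧} (hP : IsUnit P)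
    (hΦP : X ^ n ∣ Φ * P - 1) (hL : qd P = -L * P) : X ^ n ∣ qd Φ - L * Φ := by
  have hqd : X ^ n ∣ qd (Φ * P) := by
    simpa [← qdDerivation_apply] using X_pow_dvd_qd hΦP
  rw [← hP.dvd_mul_right]
  convert hqd using 1
  rw [qd_mul, hL]
  ring

theorem coeff_one_add_mul_G2 (m : ℕ) :
    coeff m (1 + 24 * G2) = 24 * ∑ d ∈ m.divisors, (d : ℚ) := by
  rw [← map_ofNat C 24, map_add, coeff_C_mul, coeff_one, G2, coeff_mk]
  split_ifs with hm <;> simp [hm]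

def partialProd24 (N : ℕ) : ℚ⟦X⟧ := ∏ n ∈ range N, (1 - X ^ (n + 1)) ^ 24

def lambertPartialSum (N : ℕ) : ℚ⟦X⟧ :=
  ∑ n ∈ range N, C (24 * (n + 1) : ℚ) * ((1 - X ^ (n + 1))⁻¹ - 1)

theorem isUnit_partialProd24 (N : ℕ) : IsUnit (partialProd24 N) := by
  simp [partialProd24, isUnit_iff_constantCoeff]

theorem qd_partialProd24 (N : ℕ) :
    qd (partialProd24 N) = -lambertPartialSum N * partialProd24 N := by
  rw [← qdDerivation_apply, partialProd24, qdDerivation.map_prod_of_map_eq_mul _ _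
    (fun n : ℕ => -C (24 * (n + 1) : ℚ) * ((1 - X ^ (n + 1))⁻¹ - 1))]
  · simp [lambertPartialSum]
  intro n _
  rw [qdDerivation.map_pow_of_map_eq_mul 24
    (by rw [qdDerivation_apply, qd_one_sub_X_pow n.add_one_ne_zero])]
  congr 1
  simp only [map_mul, map_ofNat, map_add, map_one, map_natCast, Nat.cast_ofNat, Nat.cast_add,
    Nat.cast_one]
  ring

theorem coeff_lambertPartialSum {N m : ℕ} (hm : m ≤ N) :
    coeff m (lambertPartialSum N) = 24 * ∑ d ∈ m.divisors, (d : ℚ) := by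
  have hsub : m.divisors ⊆ range (N + 1) := fun d hd =>
    mem_range.mpr (Nat.lt_succ_of_le ((Nat.divisor_le hd).trans hm))
  have hdiv : ∑ d ∈ m.divisors, (d : ℚ) =
      ∑ d ∈ range (N + 1), if d ∈ m.divisors then (d : ℚ) else 0 := by
    rw [sum_ite_mem, inter_eq_right.mpr hsub]
  simp only [lambertPartialSum, map_sum, coeff_C_mul,
    coeff_inv_one_sub_X_pow_sub_one (Nat.add_one_ne_zero _)]
  rw [hdiv, sum_range_succ', mul_add, mul_sum]
  simp

theorem X_pow_dvd_one_add_mul_G2_sub_lambertPartialSum (N : ℕ) :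
    X ^ (N + 1) ∣ 1 + 24 * G2 - lambertPartialSum N := by
  rw [X_pow_dvd_iff]
  intro m hm
  rw [map_sub, coeff_one_add_mul_G2, coeff_lambertPartialSum (Nat.le_of_lt_succ hm), sub_self]

/-- `hΦ` characterizes `Φ = ∏_{n≥1}(1-qⁿ)^{-24}`: times the partial product up to `n = N`, it is
`1` modulo `q^{N+1}`. -/
theorem qd_eta_inv_24
    (Φ : PowerSeries ℚ)
    (hΦ : ∀ N : ℕ,
      trunc (N + 1) (Φ * ∏ n ∈ range N, ((1 : PowerSeries ℚ) - X ^ (n + 1)) ^ 24) = 1) :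
    qd Φ = (1 + 24 * G2) * Φ := by
  have hmod (N : ℕ) : X ^ (N + 1) ∣ qd Φ - (1 + 24 * G2) * Φ := by
    have hΦP : X ^ (N + 1) ∣ Φ * partialProd24 N - 1 := by
      rw [X_pow_dvd_sub_iff_trunc_eq, trunc_one]
      exact hΦ N
    have hqd := X_pow_dvd_qd_sub_mul_of_X_pow_dvd_mul_sub_one (isUnit_partialProd24 N) hΦP
      (qd_partialProd24 N)
    have hG2 := (X_pow_dvd_one_add_mul_G2_sub_lambertPartialSum N).mul_right Φ
    convert dvd_sub hqd hG2 using 1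
    ring
  exact sub_eq_zero.mp <| eq_zero_of_forall_X_pow_dvd fun N =>
    (pow_dvd_pow X N.le_succ).trans (hmod N)

end
end

section
/- Integrality criterion on K3^[2]: for rationals a, b and integers d, k with k ∈ {0,1}, consider the seven-element integral basis D(W)², D(W)D(F), D(F)², δ², e_W, e_F, V of the Hodge classes, written w², wf, f², δ², e_w := (w² + wδ)/2, e_f := (f² + fδ)/2, V. The class n = (a/2)(w + d f − (k/2)δ)² + b·c₂, where c₂ = 24V − 3δ², lies in the ℤ-span of the basis {w², wf, f², δ², e_w, e_f, V} if and only if: in the case k = 0, a ∈ 2ℤ and 3b ∈ ℤ; in the case k = 1, a ∈ ℤ, 24b ∈ ℤ, and a/8 − 3b ∈ ℤ. -/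
open MvPolynomial

noncomputable section

/-- Model of degree-4 cohomology of `K3^[2]`: the polynomial ring `ℚ[w,f,δ]` with an extra
symbol `V`, realized as `MvPolynomial (Fin 4) ℚ` with `w = X 0`, `f = X 1`, `δ = X 2`,
`V = X 3`. -/
abbrev H4Model := MvPolynomial (Fin 4) ℚ

def wcl : H4Model := X 0
def fcl : H4Model := X 1
def δcl : H4Model := X 2
def Vcl : H4Model := X 3

/-- The integral lattice of Hodge classes: the ℤ-span of the basis
`w², wf, f², δ², e_w = (w²+wδ)/2, e_f = (f²+fδ)/2, V`. -/
def hodgeLattice : Submodule ℤ H4Model :=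
  Submodule.span ℤ
    ({wcl ^ 2, wcl * fcl, fcl ^ 2, δcl ^ 2,
      C (1 / 2 : ℚ) * (wcl ^ 2 + wcl * δcl),
      C (1 / 2 : ℚ) * (fcl ^ 2 + fcl * δcl), Vcl} : Set H4Model)

/-- Evaluation at a rational point, as a `ℤ`-linear map. -/
def ev (x y z v : ℚ) : H4Model →ₗ[ℤ] ℚ :=
  ((aeval (![x, y, z, v] : Fin 4 → ℚ)).toLinearMap).restrictScalars ℤ

lemma ev_apply (x y z v : ℚ) (p : H4Model) :
    ev x y z v p = aeval (![x, y, z, v] : Fin 4 → ℚ) p := rfl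

/-- If a `ℤ`-linear functional takes integer values on all seven generators of the lattice,
then it takes integer values on every lattice element. -/
lemma exists_int_of_mem (L : H4Model →ₗ[ℤ] ℚ)
    (h : ∀ g ∈ ({wcl ^ 2, wcl * fcl, fcl ^ 2, δcl ^ 2,
      C (1 / 2 : ℚ) * (wcl ^ 2 + wcl * δcl),
      C (1 / 2 : ℚ) * (fcl ^ 2 + fcl * δcl), Vcl} : Set H4Model), ∃ m : ℤ, L g = m)
    {p : H4Model} (hp : p ∈ hodgeLattice) : ∃ m : ℤ, L p = m := by
  have hle : hodgeLattice ≤ (Submodule.span ℤ ({(1:ℚ)} : Set ℚ)).comap L := by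
    rw [hodgeLattice, Submodule.span_le]
    intro g hg
    obtain ⟨m, hm⟩ := h g hg
    simp only [Set.mem_preimage, SetLike.mem_coe, Submodule.mem_comap, hm,
      Submodule.mem_span_singleton]
    exact ⟨m, by simp⟩
  have h2 := hle hp
  rw [Submodule.mem_comap, Submodule.mem_span_singleton] at h2
  obtain ⟨m, hm⟩ := h2
  exact ⟨m, by simpa using hm.symm⟩

lemma zsmul_eq_C_mul (c : ℤ) (p : H4Model) : c • p = C (c : ℚ) * p := by
  rw [← MvPolynomial.smul_eq_C_mul, ← Int.cast_smul_eq_zsmul ℚ]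

/-- The functional extracting the coefficient of `w²` minus that of `wδ` is integral on the
lattice generators. -/
lemma hL1 : ∀ g ∈ ({wcl ^ 2, wcl * fcl, fcl ^ 2, δcl ^ 2,
      C (1 / 2 : ℚ) * (wcl ^ 2 + wcl * δcl),
      C (1 / 2 : ℚ) * (fcl ^ 2 + fcl * δcl), Vcl} : Set H4Model),
    ∃ m : ℤ, (ev 1 0 0 0 + ev 1 0 0 0 + ev 0 0 1 0 - ev 1 0 1 0) g = m := by
  intro g hg
  simp only [Set.mem_insert_iff, Set.mem_singleton_iff] at hg
  rcases hg with h|h|h|h|h|h|h <;> subst h <;>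
    simp only [LinearMap.sub_apply, LinearMap.add_apply, ev_apply, wcl, fcl, δcl, Vcl] <;>
    (try norm_num [Matrix.cons_val_two, Matrix.cons_val_three]) <;>
    first
    | exact ⟨0, Int.cast_zero.symm⟩
    | exact ⟨1, Int.cast_one.symm⟩

/-- The coefficient-of-`δ²` functional is integral on the lattice generators. -/
lemma hL4 : ∀ g ∈ ({wcl ^ 2, wcl * fcl, fcl ^ 2, δcl ^ 2,
      C (1 / 2 : ℚ) * (wcl ^ 2 + wcl * δcl),
      C (1 / 2 : ℚ) * (fcl ^ 2 + fcl * δcl), Vcl} : Set H4Model),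
    ∃ m : ℤ, (ev 0 0 1 0) g = m := by
  intro g hg
  simp only [Set.mem_insert_iff, Set.mem_singleton_iff] at hg
  rcases hg with h|h|h|h|h|h|h <;> subst h <;>
    simp only [ev_apply, wcl, fcl, δcl, Vcl] <;>
    (try norm_num) <;>
    first
    | exact ⟨0, Int.cast_zero.symm⟩
    | exact ⟨1, Int.cast_one.symm⟩

/-- The coefficient-of-`V` functional is integral on the lattice generators. -/
lemma hL7 : ∀ g ∈ ({wcl ^ 2, wcl * fcl, fcl ^ 2, δcl ^ 2,
      C (1 / 2 : ℚ) * (wcl ^ 2 + wcl * δcl),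
      C (1 / 2 : ℚ) * (fcl ^ 2 + fcl * δcl), Vcl} : Set H4Model),
    ∃ m : ℤ, (ev 0 0 0 1) g = m := by
  intro g hg
  simp only [Set.mem_insert_iff, Set.mem_singleton_iff] at hg
  rcases hg with h|h|h|h|h|h|h <;> subst h <;>
    simp only [ev_apply, wcl, fcl, δcl, Vcl] <;>
    (try norm_num) <;>
    first
    | exact ⟨0, Int.cast_zero.symm⟩
    | exact ⟨1, Int.cast_one.symm⟩

lemma hg1 : (wcl ^ 2 : H4Model) ∈ hodgeLattice :=
  Submodule.subset_span (Set.mem_insert _ _)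
lemma hg2 : (wcl * fcl : H4Model) ∈ hodgeLattice :=
  Submodule.subset_span (Set.mem_insert_of_mem _ (Set.mem_insert _ _))
lemma hg3 : (fcl ^ 2 : H4Model) ∈ hodgeLattice :=
  Submodule.subset_span (Set.mem_insert_of_mem _ (Set.mem_insert_of_mem _ (Set.mem_insert _ _)))
lemma hg4 : (δcl ^ 2 : H4Model) ∈ hodgeLattice :=
  Submodule.subset_span (Set.mem_insert_of_mem _ (Set.mem_insert_of_mem _
    (Set.mem_insert_of_mem _ (Set.mem_insert _ _))))
lemma hg5 : (C (1 / 2 : ℚ) * (wcl ^ 2 + wcl * δcl) : H4Model) ∈ hodgeLattice :=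
  Submodule.subset_span (Set.mem_insert_of_mem _ (Set.mem_insert_of_mem _
    (Set.mem_insert_of_mem _ (Set.mem_insert_of_mem _ (Set.mem_insert _ _)))))
lemma hg6 : (C (1 / 2 : ℚ) * (fcl ^ 2 + fcl * δcl) : H4Model) ∈ hodgeLattice :=
  Submodule.subset_span (Set.mem_insert_of_mem _ (Set.mem_insert_of_mem _
    (Set.mem_insert_of_mem _ (Set.mem_insert_of_mem _ (Set.mem_insert_of_mem _
      (Set.mem_insert _ _))))))
lemma hg7 : (Vcl : H4Model) ∈ hodgeLattice :=
  Submodule.subset_span (Set.mem_insert_of_mem _ (Set.mem_insert_of_mem _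
    (Set.mem_insert_of_mem _ (Set.mem_insert_of_mem _ (Set.mem_insert_of_mem _
      (Set.mem_insert_of_mem _ (Set.mem_singleton_iff.mpr rfl)))))))

/-- Integrality criterion on `K3^[2]`: for rationals `a, b` and integers `d`, `k ∈ {0,1}`, the
class `n = (a/2)(w + d·f − (k/2)δ)² + b(24V − 3δ²)` lies in the integral lattice iff:
(`k = 0`) `a ∈ 2ℤ` and `3b ∈ ℤ`; (`k = 1`) `a ∈ ℤ`, `24b ∈ ℤ`, and `a/8 − 3b ∈ ℤ`. -/
theorem gv_class_integrality_criterion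
    (a b : ℚ) (d k : ℤ) (hk : k = 0 ∨ k = 1) :
    (k = 0 →
      (C (a / 2) * (wcl + C (d : ℚ) * fcl - C ((k : ℚ) / 2) * δcl) ^ 2 +
          C b * (24 * Vcl - 3 * δcl ^ 2) ∈ hodgeLattice ↔
        (∃ m : ℤ, a = 2 * (m : ℚ)) ∧ (∃ m : ℤ, 3 * b = (m : ℚ)))) ∧
    (k = 1 →
      (C (a / 2) * (wcl + C (d : ℚ) * fcl - C ((k : ℚ) / 2) * δcl) ^ 2 +
          C b * (24 * Vcl - 3 * δcl ^ 2) ∈ hodgeLattice ↔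
        (∃ m : ℤ, a = (m : ℚ)) ∧ (∃ m : ℤ, 24 * b = (m : ℚ)) ∧
          (∃ m : ℤ, a / 8 - 3 * b = (m : ℚ)))) := by
  clear hk
  constructor
  · -- k = 0
    intro hk0; subst hk0
    constructor
    · intro hp
      constructor
      · obtain ⟨m, hm⟩ := exists_int_of_mem _ hL1 hp
        refine ⟨m, ?_⟩
        have : a / 2 = (m : ℚ) := by
          rw [← hm]
          simp only [LinearMap.sub_apply, LinearMap.add_apply, ev_apply, wcl, fcl, δcl, Vcl]
          simp
          ring
        linarith
      · obtain ⟨m, hm⟩ := exists_int_of_mem _ hL4 hp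
        refine ⟨-m, ?_⟩
        have : -(3 * b) = (m : ℚ) := by
          rw [← hm]
          simp only [ev_apply, wcl, fcl, δcl, Vcl]
          simp
          ring
        push_cast
        linarith
    · rintro ⟨⟨m, ha⟩, ⟨m', hb⟩⟩
      subst ha
      have hb' : b = (m' : ℚ) / 3 := by linarith
      subst hb'
      have key : C ((2 * (m:ℚ)) / 2) * (wcl + C (d : ℚ) * fcl - C (((0:ℤ) : ℚ) / 2) * δcl) ^ 2 +
          C ((m' : ℚ) / 3) * (24 * Vcl - 3 * δcl ^ 2)
          = m • (wcl ^ 2) + (2 * m * d) • (wcl * fcl) + (m * d ^ 2) • (fcl ^ 2)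
            + (-m') • (δcl ^ 2) + (8 * m') • Vcl := by
        simp only [zsmul_eq_C_mul]
        apply MvPolynomial.funext
        intro x
        simp only [map_add, map_mul, map_sub, map_pow, map_ofNat, eval_C, eval_X,
          wcl, fcl, δcl, Vcl]
        push_cast
        ring
      rw [key]
      exact Submodule.add_mem _ (Submodule.add_mem _ (Submodule.add_mem _
        (Submodule.add_mem _ (Submodule.smul_mem _ _ hg1) (Submodule.smul_mem _ _ hg2))
        (Submodule.smul_mem _ _ hg3)) (Submodule.smul_mem _ _ hg4))
        (Submodule.smul_mem _ _ hg7)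
  · -- k = 1
    intro hk1; subst hk1
    constructor
    · intro hp
      refine ⟨?_, ?_, ?_⟩
      · obtain ⟨m, hm⟩ := exists_int_of_mem _ hL1 hp
        refine ⟨m, ?_⟩
        rw [← hm]
        simp only [LinearMap.sub_apply, LinearMap.add_apply, ev_apply, wcl, fcl, δcl, Vcl]
        simp
        ring
      · obtain ⟨m, hm⟩ := exists_int_of_mem _ hL7 hp
        refine ⟨m, ?_⟩
        rw [← hm]
        simp only [ev_apply, wcl, fcl, δcl, Vcl]
        simp
        ring
      · obtain ⟨m, hm⟩ := exists_int_of_mem _ hL4 hp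
        refine ⟨m, ?_⟩
        rw [← hm]
        simp only [ev_apply, wcl, fcl, δcl, Vcl]
        simp
        ring
    · rintro ⟨⟨m, ha⟩, ⟨m24, h24⟩, ⟨m3, h3⟩⟩
      subst ha
      have hb' : b = (m24 : ℚ) / 24 := by linarith
      subst hb'
      obtain ⟨r, hr⟩ := Int.even_mul_succ_self d
      have hrq : (d : ℚ) * ((d : ℚ) + 1) = 2 * (r : ℚ) := by
        have : ((d * (d + 1) : ℤ) : ℚ) = ((r + r : ℤ) : ℚ) := by rw [hr]
        push_cast at this
        linarith
      have key : C ((m:ℚ) / 2) * (wcl + C (d : ℚ) * fcl - C (((1:ℤ) : ℚ) / 2) * δcl) ^ 2 +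
          C ((m24 : ℚ) / 24) * (24 * Vcl - 3 * δcl ^ 2)
          = m • (wcl ^ 2) + (m * d) • (wcl * fcl) + (m * r) • (fcl ^ 2)
            + m3 • (δcl ^ 2)
            + (-m) • (C (1 / 2 : ℚ) * (wcl ^ 2 + wcl * δcl))
            + (-(m * d)) • (C (1 / 2 : ℚ) * (fcl ^ 2 + fcl * δcl))
            + m24 • Vcl := by
        simp only [zsmul_eq_C_mul]
        apply MvPolynomial.funext
        intro x
        simp only [map_add, map_mul, map_sub, map_pow, map_ofNat, eval_C, eval_X,
          wcl, fcl, δcl, Vcl]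
        push_cast
        have h3' : (m : ℚ) / 8 - 3 * ((m24 : ℚ) / 24) = (m3 : ℚ) := h3
        linear_combination ((m : ℚ) / 2) * (x 1)^2 * hrq + (x 2)^2 * h3'
      rw [key]
      exact Submodule.add_mem _ (Submodule.add_mem _ (Submodule.add_mem _
        (Submodule.add_mem _ (Submodule.add_mem _ (Submodule.add_mem _
          (Submodule.smul_mem _ _ hg1) (Submodule.smul_mem _ _ hg2))
          (Submodule.smul_mem _ _ hg3)) (Submodule.smul_mem _ _ hg4))
          (Submodule.smul_mem _ _ hg5)) (Submodule.smul_mem _ _ hg6))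
        (Submodule.smul_mem _ _ hg7)

end
end
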